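/- arXiv:math/0609590 — 3 statements merged into one kernel-verified Lean document; each statement's English description precedes it below -/
import Mathlib

section
/- Let c : ℝ → ℝ be continuous with ∫_{-∞}^z |c(v)| f_S(v) dv < ∞ for every z ∈ ℝ, and define m(z) = (2/(f_S(z) σ(z)²)) ∫_{-∞}^z c(v) f_S(v) dv. Then m is differentiable on ℝ and satisfies the linear differential equation m'(z) = 2 c(z)/σ(z)² − (2 S(z)/σ(z)²) m(z) for every z ∈ ℝ. -/
/-!
`f σ² = exp (2 ∫₀ S / σ²) / G` satisfies `(f σ²)' = (2 S / σ²) · f σ²`, so it is an integrating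
factor: `m = F / (f σ²)` with `F(z) = 2 ∫_{-∞}^z c f`, and the quotient rule together with
`F' = 2 c f` gives the equation.
-/

open MeasureTheory Set

theorem HasDerivAt.div_of_hasDerivAt_eq_mul {F w : ℝ → ℝ} {F' k z : ℝ}
    (hF : HasDerivAt F F' z) (hw : HasDerivAt w (k * w z) z) (hwz : w z ≠ 0) :
    HasDerivAt (fun x => F x / w x) (F' / w z - k * (F z / w z)) z :=
  (hF.div hw hwz).congr_deriv (by field_simp)

theorem hasDerivAt_mul_exp_mul_integral {g : ℝ → ℝ} (hg : Continuous g) (a k z : ℝ) :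
    HasDerivAt (fun y => a * Real.exp (k * ∫ v in (0 : ℝ)..y, g v))
      (k * g z * (a * Real.exp (k * ∫ v in (0 : ℝ)..z, g v))) z :=
  ((((hg.integral_hasStrictDerivAt 0 z).hasDerivAt.const_mul k).exp).const_mul a).congr_deriv
    (by ring)

theorem hasDerivAt_setIntegral_Iic {g : ℝ → ℝ} (hg : Continuous g)
    (hint : ∀ x, IntegrableOn g (Iic x)) (z : ℝ) :
    HasDerivAt (fun x => ∫ v in Iic x, g v) (g z) z := by
  have hsplit : ∀ x, ∫ v in Iic x, g v = (∫ v in Iic z, g v) + ∫ v in z..x, g v := fun x => by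
    rw [← intervalIntegral.integral_Iic_sub_Iic (hint z) (hint x)]
    ring
  rw [funext hsplit]
  exact ((hg.integral_hasStrictDerivAt z z).hasDerivAt).const_add _

theorem MeasureTheory.IntegrableOn.mul_of_abs_mul {c f : ℝ → ℝ} {s : Set ℝ} (hc : Continuous c)
    (hf : Continuous f) (hf0 : ∀ v, 0 ≤ f v) (h : IntegrableOn (fun v => |c v| * f v) s) :
    IntegrableOn (fun v => c v * f v) s := by
  refine h.mono' (hc.mul hf).aestronglyMeasurable.restrict (ae_of_all _ fun v => ?_)
  rw [Real.norm_eq_abs, abs_mul, abs_of_nonneg (hf0 v)]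

theorem solution_of_linear_ode_general
    (σ S : ℝ → ℝ) (hσ : Continuous σ) (hσpos : ∀ v, 0 < (σ v) ^ 2)
    (hS : Continuous S)
    (G : ℝ)
    (hGpos : 0 < G)
    (f : ℝ → ℝ)
    (hf : ∀ y, f y = (G * (σ y) ^ 2)⁻¹ * Real.exp (2 * ∫ v in (0:ℝ)..y, S v / (σ v) ^ 2))
    (c : ℝ → ℝ) (hc : Continuous c)
    (hcint : ∀ z : ℝ, MeasureTheory.IntegrableOn (fun v => |c v| * f v) (Set.Iic z))
    (m : ℝ → ℝ)
    (hm : ∀ z, m z = 2 / (f z * (σ z) ^ 2) * ∫ v in Set.Iic z, c v * f v) :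
    ∀ z, HasDerivAt m (2 * c z / (σ z) ^ 2 - 2 * S z / (σ z) ^ 2 * m z) z := by
  have hσ0 : ∀ y, σ y ^ 2 ≠ 0 := fun y => (hσpos y).ne'
  have hfpos : ∀ y, 0 < f y := fun y => by
    rw [hf]; exact mul_pos (inv_pos.2 (mul_pos hGpos (hσpos y))) (Real.exp_pos _)
  have hw : ∀ y, f y * σ y ^ 2 = G⁻¹ * Real.exp (2 * ∫ v in (0:ℝ)..y, S v / σ v ^ 2) := by
    intro y
    rw [hf, mul_inv, mul_right_comm, inv_mul_cancel_right₀ (hσ0 y)]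
  have hw' : ∀ z, HasDerivAt (fun y => f y * σ y ^ 2) (2 * S z / σ z ^ 2 * (f z * σ z ^ 2)) z := by
    intro z
    rw [funext hw, hw, mul_div_assoc]
    exact hasDerivAt_mul_exp_mul_integral (hS.div (hσ.pow 2) hσ0) _ _ z
  have hfcont : Continuous f := by
    have hwcont : Continuous fun y => f y * σ y ^ 2 :=
      continuous_iff_continuousAt.2 fun z => (hw' z).continuousAt
    exact (hwcont.div (hσ.pow 2) hσ0).congr fun y => mul_div_cancel_right₀ _ (hσ0 y)
  have hcf : ∀ x, IntegrableOn (fun v => c v * f v) (Iic x) := fun x =>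
    (hcint x).mul_of_abs_mul hc hfcont fun y => (hfpos y).le
  have hm' : m = fun x => 2 * (∫ v in Iic x, c v * f v) / (f x * σ x ^ 2) :=
    funext fun x => by rw [hm, div_mul_eq_mul_div]
  intro z
  have hF : HasDerivAt (fun x => 2 * ∫ v in Iic x, c v * f v) (2 * (c z * f z)) z :=
    (hasDerivAt_setIntegral_Iic (hc.mul hfcont) hcf z).const_mul 2
  rw [hm']
  refine (hF.div_of_hasDerivAt_eq_mul (hw' z) (mul_ne_zero (hfpos z).ne' (hσ0 z))).congr_deriv ?_
  field_simp [(hfpos z).ne']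

/-- If `c` is continuous with `∫_{-∞}^z |c| f_S < ∞` for every `z`, then
`m(z) = (2/(f_S(z) σ(z)²)) ∫_{-∞}^z c f_S` is differentiable and solves
`m'(z) = 2c(z)/σ(z)² − (2S(z)/σ(z)²) m(z)`. -/
theorem solution_of_linear_ode
    (σ S : ℝ → ℝ) (hσ : Continuous σ) (hσpos : ∀ v, 0 < (σ v) ^ 2)
    (hS : Continuous S)
    (G : ℝ)
    (hGint : MeasureTheory.Integrable
      (fun x => ((σ x) ^ 2)⁻¹ * Real.exp (2 * ∫ v in (0:ℝ)..x, S v / (σ v) ^ 2)))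
    (hG : G = ∫ x, ((σ x) ^ 2)⁻¹ * Real.exp (2 * ∫ v in (0:ℝ)..x, S v / (σ v) ^ 2))
    (hGpos : 0 < G)
    (f : ℝ → ℝ)
    (hf : ∀ y, f y = (G * (σ y) ^ 2)⁻¹ * Real.exp (2 * ∫ v in (0:ℝ)..y, S v / (σ v) ^ 2))
    (c : ℝ → ℝ) (hc : Continuous c)
    (hcint : ∀ z : ℝ, MeasureTheory.IntegrableOn (fun v => |c v| * f v) (Set.Iic z))
    (m : ℝ → ℝ)
    (hm : ∀ z, m z = 2 / (f z * (σ z) ^ 2) * ∫ v in Set.Iic z, c v * f v) :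
    ∀ z, HasDerivAt m (2 * c z / (σ z) ^ 2 - 2 * S z / (σ z) ^ 2 * m z) z :=
  solution_of_linear_ode_general σ S hσ hσpos hS G hGpos f hf c hc hcint m hm
end

section
/- Fix x ∈ ℝ. Assume ∫_{-∞}^x |2h(y)S(y) + h'(y)σ(y)²| f_S(y) dy < ∞ and lim_{y→−∞} K_x(y) h(y) σ(y)² f_S(y) = 0. Define M(y) = ∫_0^y [ 2·1_{{z<x}} h(z) K_x(z) + 2 (F_S(x ∧ z) − F_S(x) F_S(z)) / (σ(z)² f_S(z)) ] dz. Then M is twice continuously differentiable on ℝ and solves the Poisson-type equation M'(y) S(y) + (1/2) M''(y) σ(y)² = c_x(y) for every y ∈ ℝ. -/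
/-!
Put `E y = exp (2 ∫₀^y S/σ²)`, so that `σ² f_S = E / G(S)` and `E' = E · 2S/σ²`. The latter turns
the operator `g ↦ g S + g' σ²/2` into `g ↦ σ²/(2E) · (E g)'`; hence, writing `M' = 2Φ/E`, the
Poisson equation becomes `Φ' = (E/σ²) c_x`. The integrand of `M` is `2Φ/E` for
`Φ = G F_S(x) (1 - F_S) + 1_{· < x} (E h K_x + G (F_S - F_S(x)))`, and `Φ' = (E/σ²) c_x` is a direct
computation. The second summand of `Φ` and its derivative both vanish at `x` (as `K_x(x) = 0`),
so the indicator costs no differentiability and `Φ` is `C¹`, which makes `M` `C²`.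
-/

open Set Filter MeasureTheory

section Calculus

theorem continuous_ite_lt_zero {X : Type*} [TopologicalSpace X] [Zero X] {U : ℝ → X} {a : ℝ}
    (hU : Continuous U) (ha : U a = 0) :
    Continuous fun z => if z < a then U z else 0 := by
  have h := Continuous.if_le (f := fun _ => a) (g := id) (f' := fun _ => (0 : X))
    continuous_const hU continuous_const continuous_id fun z (hz : a = z) => by rw [← hz, ha]
  refine h.congr fun z => ?_
  simp only [id, ← not_lt, ite_not]

variable {V : Type*} [NormedAddCommGroup V] [NormedSpace ℝ V]

theorem hasDerivAt_integral_Iic [CompleteSpace V] {f : ℝ → V} (hf : Continuous f)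
    (hfi : Integrable f) (x : ℝ) :
    HasDerivAt (fun t => ∫ y in Iic t, f y) (f x) x := by
  refine ((hf.integral_hasStrictDerivAt 0 x).hasDerivAt.const_add (∫ y in Iic 0, f y))
    |>.congr_of_eventuallyEq (Eventually.of_forall fun t => ?_)
  dsimp only
  rw [← intervalIntegral.integral_Iic_sub_Iic hfi.integrableOn hfi.integrableOn,
    add_sub_cancel]

theorem contDiff_succ_integral [CompleteSpace V] {f : ℝ → V} {n : ℕ} (hf : ContDiff ℝ n f)
    (a : ℝ) :
    ContDiff ℝ (n + 1) fun t => ∫ y in a..t, f y := by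
  refine contDiff_succ_iff_deriv.2 ⟨fun t => ?_, by simp, ?_⟩
  · exact (hf.continuous.integral_hasStrictDerivAt a t).hasDerivAt.differentiableAt
  · rwa [funext (hf.continuous.deriv_integral f a)]

theorem Continuous.integral_hasDerivAt_left [CompleteSpace V] {f : ℝ → V} (hf : Continuous f)
    (b y : ℝ) : HasDerivAt (fun t => ∫ v in t..b, f v) (-f y) y :=
  (intervalIntegral.integral_hasStrictDerivAt_left (hf.intervalIntegrable _ _)
    (hf.stronglyMeasurableAtFilter _ _) hf.continuousAt).hasDerivAt

theorem contDiff_one_of_hasDerivAt {f f' : ℝ → V} (hf : ∀ x, HasDerivAt f (f' x) x)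
    (hf' : Continuous f') : ContDiff ℝ 1 f :=
  contDiff_one_iff_deriv.2 ⟨fun x => (hf x).differentiableAt, by
    rwa [funext fun x => (hf x).deriv]⟩

variable {U U' : ℝ → V} {a : ℝ}

theorem hasDerivAt_ite_lt_zero (hU : ∀ y, HasDerivAt U (U' y) y) (ha : U a = 0) (ha' : U' a = 0)
    (y : ℝ) : HasDerivAt (fun z => if z < a then U z else 0) (if y < a then U' y else 0) y := by
  rcases lt_trichotomy y a with hy | rfl | hy
  · rw [if_pos hy]
    exact (hU y).congr_of_eventuallyEq <|
      eventually_of_mem (Iio_mem_nhds hy) fun z hz => if_pos hz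
  · rw [if_neg (lt_irrefl y), ← hasDerivWithinAt_univ, ← Iic_union_Ici]
    refine HasDerivWithinAt.union ?_ ?_
    · refine ha' ▸ (hU y).hasDerivWithinAt.congr (fun z hz => ?_) (by simp [ha])
      rcases (mem_Iic.1 hz).lt_or_eq with hz | rfl
      · exact if_pos hz
      · simp [ha]
    · exact (hasDerivWithinAt_const y _ 0).congr (fun z hz => if_neg (not_lt.2 hz)) (by simp)
  · rw [if_neg (not_lt.2 hy.le)]
    exact (hasDerivAt_const y 0).congr_of_eventuallyEq <|
      eventually_of_mem (Ioi_mem_nhds hy) fun z hz => if_neg (not_lt.2 (le_of_lt hz))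

end Calculus

section Flux

variable {σ S E f F h h' k : ℝ → ℝ} {G a : ℝ}

noncomputable def poissonFlux (E F h k : ℝ → ℝ) (G a z : ℝ) : ℝ :=
  G * F a * (1 - F z) + if z < a then E z * h z * k z + G * (F z - F a) else 0

theorem hasDerivAt_poissonFlux (hσ : ∀ y, σ y ≠ 0) (hG : G ≠ 0) (hh0 : ∀ y, h y ≠ 0)
    (hE : ∀ y, HasDerivAt E (E y * (2 * (S y / σ y ^ 2))) y)
    (hf : ∀ y, f y = E y / (G * σ y ^ 2)) (hF : ∀ y, HasDerivAt F (f y) y)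
    (hh : ∀ y, HasDerivAt h (h' y) y) (hk : ∀ y, HasDerivAt k (-(σ y ^ 2 * h y)⁻¹) y)
    (hka : k a = 0) (y : ℝ) :
    HasDerivAt (poissonFlux E F h k G a) (E y / σ y ^ 2 *
      ((if y < a then k y * (2 * h y * S y + h' y * σ y ^ 2) else 0) - F a)) y := by
  have hU (z : ℝ) : HasDerivAt (fun z => E z * h z * k z + G * (F z - F a))
      (E z / σ z ^ 2 * (k z * (2 * h z * S z + h' z * σ z ^ 2))) z := by
    refine ((((hE z).fun_mul (hh z)).fun_mul (hk z)).add
      (((hF z).sub_const (F a)).const_mul G)).congr_deriv ?_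
    rw [hf]
    field_simp [hσ z, hh0 z]
    ring
  have hV := hasDerivAt_ite_lt_zero (a := a) hU (by simp [hka]) (by simp [hka]) y
  refine ((((hF y).const_sub 1).const_mul (G * F a)).add hV).congr_deriv ?_
  rw [hf]
  split_ifs <;> field_simp [hσ y] <;> ring

theorem continuous_poissonSource (hσ : Continuous σ) (hS : Continuous S) (hh : Continuous h)
    (hh' : Continuous h') (hk : Continuous k) (hka : k a = 0) :
    Continuous fun y => (if y < a then k y * (2 * h y * S y + h' y * σ y ^ 2) else 0) - F a :=
  (continuous_ite_lt_zero (hk.mul (((continuous_const.mul hh).mul hS).add (hh'.mul (hσ.pow 2))))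
    (by simp [hka])).sub continuous_const

theorem integrand_eq_two_mul_poissonFlux_div {z : ℝ} (hσ : σ z ≠ 0) (hE : E z ≠ 0)
    (hf : f z = E z / (G * σ z ^ 2)) :
    2 * (if z < a then h z * k z else 0) + 2 * (F (min a z) - F a * F z) / (σ z ^ 2 * f z) =
      2 * poissonFlux E F h k G a z / E z := by
  rw [hf, poissonFlux]
  split_ifs with hz
  · rw [min_eq_right hz.le]
    field_simp
    ring
  · rw [min_eq_left (not_lt.1 hz)]
    field_simp
    ring

theorem contDiff_two_and_poisson_of_flux {Φ b M : ℝ → ℝ} (hσ : Continuous σ)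
    (hσ0 : ∀ y, σ y ≠ 0) (hS : Continuous S) (hE0 : ∀ y, E y ≠ 0)
    (hE : ∀ y, HasDerivAt E (E y * (2 * (S y / σ y ^ 2))) y)
    (hΦ : ∀ y, HasDerivAt Φ (E y / σ y ^ 2 * b y) y) (hb : Continuous b)
    (hM : ∀ y, M y = ∫ z in a..y, 2 * Φ z / E z) :
    ContDiff ℝ 2 M ∧ ∀ y, deriv M y * S y + 1 / 2 * deriv (deriv M) y * σ y ^ 2 = b y := by
  have hσ2 : Continuous fun y => σ y ^ 2 := hσ.pow 2
  have hσ20 (y : ℝ) : σ y ^ 2 ≠ 0 := pow_ne_zero 2 (hσ0 y)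
  have hEc : Continuous E := continuous_iff_continuousAt.2 fun y => (hE y).continuousAt
  have hE1 : ContDiff ℝ 1 E :=
    contDiff_one_of_hasDerivAt hE (hEc.mul (continuous_const.mul (hS.div hσ2 hσ20)))
  have hg : ContDiff ℝ 1 fun z => 2 * Φ z / E z :=
    (contDiff_const.mul (contDiff_one_of_hasDerivAt hΦ ((hEc.div hσ2 hσ20).mul hb))).div hE1 hE0
  have hM' : M = fun y => ∫ z in a..y, 2 * Φ z / E z := funext hM
  refine ⟨hM' ▸ contDiff_succ_integral hg a, fun y => ?_⟩
  rw [hM', funext (hg.continuous.deriv_integral _ a),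
    (((hΦ y).const_mul 2).fun_div (hE y) (hE0 y)).deriv]
  field_simp [hσ0 y, hE0 y]
  ring

end Flux

theorem poisson_equation_solution_general
    (σ S : ℝ → ℝ) (hσ : Continuous σ) (hσpos : ∀ v, 0 < (σ v) ^ 2)
    (hS : Continuous S)
    (G : ℝ)
    (hGint : MeasureTheory.Integrable
      (fun x => ((σ x) ^ 2)⁻¹ * Real.exp (2 * ∫ v in (0:ℝ)..x, S v / (σ v) ^ 2)))
    (hGpos : 0 < G)
    (f : ℝ → ℝ)
    (hf : ∀ y, f y = (G * (σ y) ^ 2)⁻¹ * Real.exp (2 * ∫ v in (0:ℝ)..y, S v / (σ v) ^ 2))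
    (F : ℝ → ℝ)
    (hF : ∀ x, F x = ∫ y in Set.Iic x, f y)
    (h h' : ℝ → ℝ) (hpos : ∀ y, 0 < h y)
    (hderiv : ∀ y, HasDerivAt h (h' y) y) (hcont : Continuous h')
    (K : ℝ → ℝ → ℝ)
    (hK : ∀ x y, K x y = ∫ v in y..x, (((σ v) ^ 2) * h v)⁻¹)
    (c : ℝ → ℝ → ℝ)
    (hc : ∀ x y, c x y =
      (if y < x then K x y * (2 * h y * S y + h' y * (σ y) ^ 2) else 0) - F x)
    (x : ℝ)
    (M : ℝ → ℝ)
    (hM : ∀ y, M y = ∫ z in (0:ℝ)..y,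
      (2 * (if z < x then h z * K x z else 0) +
        2 * (F (min x z) - F x * F z) / ((σ z) ^ 2 * f z))) :
    ContDiff ℝ 2 M ∧
      ∀ y, deriv M y * S y + (1 / 2) * deriv (deriv M) y * (σ y) ^ 2 = c x y := by
  have hσ0 (y : ℝ) : σ y ≠ 0 := (pow_ne_zero_iff two_ne_zero).1 (hσpos y).ne'
  have hh : Continuous h := continuous_iff_continuousAt.2 fun y => (hderiv y).continuousAt
  have hσ2 : Continuous fun v => σ v ^ 2 := hσ.pow 2
  set E : ℝ → ℝ := fun z => Real.exp (2 * ∫ v in (0:ℝ)..z, S v / σ v ^ 2)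
  have hE (y : ℝ) : HasDerivAt E (E y * (2 * (S y / σ y ^ 2))) y := by
    have hSσ : Continuous fun v => S v / σ v ^ 2 := hS.div hσ2 fun v => pow_ne_zero 2 (hσ0 v)
    exact ((hSσ.integral_hasStrictDerivAt 0 y).hasDerivAt.const_mul 2).exp
  have hfE (y : ℝ) : f y = E y / (G * σ y ^ 2) := by rw [hf, div_eq_inv_mul]
  have hF' (y : ℝ) : HasDerivAt F (f y) y := by
    have hfc : Continuous f := by
      rw [funext hfE]
      exact (continuous_iff_continuousAt.2 fun y => (hE y).continuousAt).div
        (continuous_const.mul hσ2) fun y => mul_ne_zero hGpos.ne' (pow_ne_zero 2 (hσ0 y))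
    have hfi : Integrable f := by
      convert hGint.const_mul G⁻¹ using 2 with y
      rw [hf, mul_inv, mul_assoc]
    rw [funext hF]
    exact hasDerivAt_integral_Iic hfc hfi y
  have hK' (y : ℝ) : HasDerivAt (K x) (-(σ y ^ 2 * h y)⁻¹) y := by
    rw [funext (hK x)]
    exact (hσ2.mul hh).inv₀ (fun v => mul_ne_zero (pow_ne_zero 2 (hσ0 v)) (hpos v).ne')
      |>.integral_hasDerivAt_left x y
  have hKx : K x x = 0 := by rw [hK, intervalIntegral.integral_same]
  have hΦ (y : ℝ) : HasDerivAt (poissonFlux E F h (K x) G x) (E y / σ y ^ 2 * c x y) y := by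
    rw [hc]
    exact hasDerivAt_poissonFlux hσ0 hGpos.ne' (fun y => (hpos y).ne') hE hfE hF' hderiv hK' hKx y
  have hcx : Continuous (c x) := by
    rw [funext (hc x)]
    exact continuous_poissonSource hσ hS hh hcont
      (continuous_iff_continuousAt.2 fun y => (hK' y).continuousAt) hKx
  exact contDiff_two_and_poisson_of_flux hσ hσ0 hS (fun y => (Real.exp_pos _).ne') hE hΦ hcx
    fun y => (hM y).trans <| intervalIntegral.integral_congr fun z _ =>
      integrand_eq_two_mul_poissonFlux_div (hσ0 z) (Real.exp_pos _).ne' (hfE z)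

/-- `M` is twice continuously differentiable and solves the Poisson-type equation
`M' S + (1/2) M'' σ² = c_x`. -/
theorem poisson_equation_solution
    (σ S : ℝ → ℝ) (hσ : Continuous σ) (hσpos : ∀ v, 0 < (σ v) ^ 2)
    (hS : Continuous S)
    (G : ℝ)
    (hGint : MeasureTheory.Integrable
      (fun x => ((σ x) ^ 2)⁻¹ * Real.exp (2 * ∫ v in (0:ℝ)..x, S v / (σ v) ^ 2)))
    (hG : G = ∫ x, ((σ x) ^ 2)⁻¹ * Real.exp (2 * ∫ v in (0:ℝ)..x, S v / (σ v) ^ 2))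
    (hGpos : 0 < G)
    (f : ℝ → ℝ)
    (hf : ∀ y, f y = (G * (σ y) ^ 2)⁻¹ * Real.exp (2 * ∫ v in (0:ℝ)..y, S v / (σ v) ^ 2))
    (F : ℝ → ℝ)
    (hF : ∀ x, F x = ∫ y in Set.Iic x, f y)
    (h h' : ℝ → ℝ) (hpos : ∀ y, 0 < h y)
    (hderiv : ∀ y, HasDerivAt h (h' y) y) (hcont : Continuous h')
    (K : ℝ → ℝ → ℝ)
    (hK : ∀ x y, K x y = ∫ v in y..x, (((σ v) ^ 2) * h v)⁻¹)
    (c : ℝ → ℝ → ℝ)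
    (hc : ∀ x y, c x y =
      (if y < x then K x y * (2 * h y * S y + h' y * (σ y) ^ 2) else 0) - F x)
    (x : ℝ)
    (hint : MeasureTheory.IntegrableOn
      (fun y => |2 * h y * S y + h' y * (σ y) ^ 2| * f y) (Set.Iic x))
    (hlim : Filter.Tendsto (fun y => K x y * h y * (σ y) ^ 2 * f y)
      Filter.atBot (nhds 0))
    (M : ℝ → ℝ)
    (hM : ∀ y, M y = ∫ z in (0:ℝ)..y,
      (2 * (if z < x then h z * K x z else 0) +
        2 * (F (min x z) - F x * F z) / ((σ z) ^ 2 * f z))) :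
    ContDiff ℝ 2 M ∧
      ∀ y, deriv M y * S y + (1 / 2) * deriv (deriv M) y * (σ y) ^ 2 = c x y :=
  poisson_equation_solution_general σ S hσ hσpos hS G hGint hGpos f hf F hF h h' hpos hderiv hcont K
    hK c hc x M hM
end

section
/- Let g : ℝ → ℝ be twice continuously differentiable with ∫_ℝ |g'(y)S(y) + (1/2) g''(y) σ(y)²| f_S(y) dy < ∞ and lim_{y→−∞} g'(y) σ(y)² f_S(y) = 0 = lim_{y→+∞} g'(y) σ(y)² f_S(y). Then ∫_ℝ ( g'(y) S(y) + (1/2) g''(y) σ(y)² ) f_S(y) dy = 0, i.e. the generator of the diffusion applied to g has zero mean under the invariant density. -/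
open MeasureTheory Filter Real

/-! Writing `E y = 2 ∫₀ʸ S/σ²`, we have `σ² f_S = G⁻¹ exp E`, so for a `C¹` function `φ`
`(φ σ² f_S)' = (φ' + 2 φ S / σ²) G⁻¹ exp E = 2 (φ S + ½ φ' σ²) f_S`.
With `φ = g'` the integrand is half the derivative of `g' σ² f_S`, which vanishes at `±∞`,
so its integral over `ℝ` is zero. -/

lemma hasDerivAt_exp_const_mul_primitive {a : ℝ → ℝ} (ha : Continuous a) (c y : ℝ) :
    HasDerivAt (fun y => exp (c * ∫ v in (0:ℝ)..y, a v))
      (exp (c * ∫ v in (0:ℝ)..y, a v) * (c * a y)) y :=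
  ((intervalIntegral.integral_hasDerivAt_right (ha.intervalIntegrable 0 y)
    (ha.stronglyMeasurableAtFilter _ _) ha.continuousAt).const_mul c).exp

section InvariantDensity

variable {σ S f : ℝ → ℝ} {G : ℝ}

lemma sq_mul_invariantDensity (hσpos : ∀ v, 0 < σ v ^ 2)
    (hf : ∀ y, f y = (G * σ y ^ 2)⁻¹ * exp (2 * ∫ v in (0:ℝ)..y, S v / σ v ^ 2)) (y : ℝ) :
    σ y ^ 2 * f y = G⁻¹ * exp (2 * ∫ v in (0:ℝ)..y, S v / σ v ^ 2) := by
  rw [hf, mul_inv, ← mul_assoc, mul_left_comm, mul_inv_cancel₀ (hσpos y).ne', mul_one]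

lemma continuous_invariantDensity (hσ : Continuous σ) (hσpos : ∀ v, 0 < σ v ^ 2)
    (hS : Continuous S)
    (hf : ∀ y, f y = (G * σ y ^ 2)⁻¹ * exp (2 * ∫ v in (0:ℝ)..y, S v / σ v ^ 2)) :
    Continuous f := by
  have hσsq : Continuous fun v => σ v ^ 2 := hσ.pow 2
  have hE : Continuous fun y => exp (2 * ∫ v in (0:ℝ)..y, S v / σ v ^ 2) :=
    (continuous_const.mul (intervalIntegral.continuous_primitive
      (fun a b => (hS.div hσsq fun v => (hσpos v).ne').intervalIntegrable a b) 0)).rexp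
  simp_rw [funext hf, mul_inv, mul_assoc]
  exact continuous_const.mul ((hσsq.inv₀ fun v => (hσpos v).ne').mul hE)

lemma hasDerivAt_mul_sq_mul_invariantDensity (hσ : Continuous σ) (hσpos : ∀ v, 0 < σ v ^ 2)
    (hS : Continuous S)
    (hf : ∀ y, f y = (G * σ y ^ 2)⁻¹ * exp (2 * ∫ v in (0:ℝ)..y, S v / σ v ^ 2))
    {φ φ' : ℝ → ℝ} (hφ : ∀ y, HasDerivAt φ (φ' y) y) (y : ℝ) :
    HasDerivAt (fun y => φ y * σ y ^ 2 * f y)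
      (2 * ((φ y * S y + 1 / 2 * φ' y * σ y ^ 2) * f y)) y := by
  have hσne : σ y ≠ 0 := fun h => by simpa [h] using hσpos y
  have hflux : (fun y => φ y * σ y ^ 2 * f y) =
      fun y => φ y * (G⁻¹ * exp (2 * ∫ v in (0:ℝ)..y, S v / σ v ^ 2)) := by
    ext z
    rw [mul_assoc, sq_mul_invariantDensity hσpos hf]
  rw [hflux]
  refine ((hφ y).mul ((hasDerivAt_exp_const_mul_primitive (a := fun v => S v / σ v ^ 2)
    (hS.div (hσ.pow 2) fun v => (hσpos v).ne') 2 y).const_mul G⁻¹)).congr_deriv ?_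
  rw [hf]
  field_simp
  ring

end InvariantDensity

theorem generator_zero_mean_general
    (σ S : ℝ → ℝ) (hσ : Continuous σ) (hσpos : ∀ v, 0 < (σ v) ^ 2)
    (hS : Continuous S)
    (G : ℝ)
    (f : ℝ → ℝ)
    (hf : ∀ y, f y = (G * (σ y) ^ 2)⁻¹ * Real.exp (2 * ∫ v in (0:ℝ)..y, S v / (σ v) ^ 2))
    (g : ℝ → ℝ) (hg : ContDiff ℝ 2 g)
    (hint : MeasureTheory.Integrable
      (fun y => |deriv g y * S y + (1 / 2) * deriv (deriv g) y * (σ y) ^ 2| * f y))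
    (hbot : Filter.Tendsto (fun y => deriv g y * (σ y) ^ 2 * f y)
      Filter.atBot (nhds 0))
    (htop : Filter.Tendsto (fun y => deriv g y * (σ y) ^ 2 * f y)
      Filter.atTop (nhds 0)) :
    ∫ y, (deriv g y * S y + (1 / 2) * deriv (deriv g) y * (σ y) ^ 2) * f y = 0 := by
  have hg' : ContDiff ℝ 1 (deriv g) := hg.deriv'
  have hgen_cont : Continuous fun y =>
      (deriv g y * S y + 1 / 2 * deriv (deriv g) y * σ y ^ 2) * f y :=
    ((hg'.continuous.mul hS).add ((continuous_const.mul (hg'.continuous_deriv le_rfl)).mul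
      (hσ.pow 2))).mul (continuous_invariantDensity hσ hσpos hS hf)
  have hgen_int : Integrable fun y =>
      2 * ((deriv g y * S y + 1 / 2 * deriv (deriv g) y * σ y ^ 2) * f y) :=
    (hint.norm.mono' hgen_cont.aestronglyMeasurable (by simp)).const_mul 2
  have hflux := integral_of_hasDerivAt_of_tendsto
    (hasDerivAt_mul_sq_mul_invariantDensity hσ hσpos hS hf
      fun y => ((hg'.differentiable one_ne_zero) y).hasDerivAt) hgen_int hbot htop
  rw [sub_zero, integral_const_mul] at hflux
  linarith

/-- The generator of the diffusion applied to a suitable `C²` function `g` has zero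
mean under the invariant density `f_S`. -/
theorem generator_zero_mean
    (σ S : ℝ → ℝ) (hσ : Continuous σ) (hσpos : ∀ v, 0 < (σ v) ^ 2)
    (hS : Continuous S)
    (G : ℝ)
    (hGint : MeasureTheory.Integrable
      (fun x => ((σ x) ^ 2)⁻¹ * Real.exp (2 * ∫ v in (0:ℝ)..x, S v / (σ v) ^ 2)))
    (hG : G = ∫ x, ((σ x) ^ 2)⁻¹ * Real.exp (2 * ∫ v in (0:ℝ)..x, S v / (σ v) ^ 2))
    (hGpos : 0 < G)
    (f : ℝ → ℝ)
    (hf : ∀ y, f y = (G * (σ y) ^ 2)⁻¹ * Real.exp (2 * ∫ v in (0:ℝ)..y, S v / (σ v) ^ 2))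
    (g : ℝ → ℝ) (hg : ContDiff ℝ 2 g)
    (hint : MeasureTheory.Integrable
      (fun y => |deriv g y * S y + (1 / 2) * deriv (deriv g) y * (σ y) ^ 2| * f y))
    (hbot : Filter.Tendsto (fun y => deriv g y * (σ y) ^ 2 * f y)
      Filter.atBot (nhds 0))
    (htop : Filter.Tendsto (fun y => deriv g y * (σ y) ^ 2 * f y)
      Filter.atTop (nhds 0)) :
    ∫ y, (deriv g y * S y + (1 / 2) * deriv (deriv g) y * (σ y) ^ 2) * f y = 0 :=
  generator_zero_mean_general σ S hσ hσpos hS G f hf g hg hint hbot htop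
end
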